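/- Let n ≥ 1 and let F := {1^i 0^{n−i} : 0 ≤ i ≤ n} ⊆ {0,1}^n be the set of bit strings consisting of a prefix of i ones followed by n−i zeros. Let x be a random bit string in {0,1}^n with P(x ∈ F) ≤ r for some r ∈ [0,1], and let y be obtained from x by standard bit mutation with rate 1/n, i.e., conditionally on x, each bit of x is flipped independently with probability 1/n. Then P(y ∈ F) ≤ r·(1/e + 3/n) + 3/n. -/

import Mathlib

/-- `onesZeros n i` is the bit string `1^i 0^(n-i)`. -/
def onesZeros (n i : ℕ) : Fin n → Bool := fun k => decide ((k : ℕ) < i)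

/-- The Pareto set of LOTZ: all bit strings `1^i 0^(n-i)` for `0 ≤ i ≤ n`. -/
def paretoSet (n : ℕ) : Finset (Fin n → Bool) := (Finset.range (n + 1)).image (onesZeros n)

/-- Standard bit mutation with rate `1/n`: each bit of `x` is flipped independently with
probability `1/n`; `mutProb n x z` is the probability that the result equals `z`. -/
noncomputable def mutProb (n : ℕ) (x z : Fin n → Bool) : ℝ :=
  ∏ i : Fin n, if z i = x i then 1 - 1 / (n : ℝ) else 1 / (n : ℝ)

/-! The Pareto set `F` consists exactly of the antitone bit strings. If the parent `x` is not
antitone, it has positions `a ≤ b` with `x a < x b`, and an offspring can only be antitone if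
one of these two bits was flipped, which has probability at most `2/n`. If `x = 1^i 0^(n-i)`,
the offspring `1^j 0^(n-j)` arises with probability at most `(1/n)^|i-j|`, and exactly
`(1-1/n)^n ≤ 1/e` for `j = i`; the two geometric tails contribute `2/(n-1) ≤ 3/n` once
`n ≥ 3`, while for `n ≤ 2` the bound `3/n ≥ 1` is trivial. Averaging over the parent gives the
claim. -/

open Finset

section Mutation

variable {n : ℕ}

lemma one_sub_one_div_natCast_nonneg (n : ℕ) : 0 ≤ 1 - 1 / (n : ℝ) :=
  sub_nonneg.mpr (by simpa using Nat.cast_inv_le_one (α := ℝ) n)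

lemma mutProb_eq_pow_hammingDist (x z : Fin n → Bool) :
    mutProb n x z =
      (1 / (n : ℝ)) ^ hammingDist x z * (1 - 1 / (n : ℝ)) ^ (n - hammingDist x z) := by
  have hcard : #{i | z i = x i} = n - hammingDist x z := by
    have := card_filter_add_card_filter_not (s := univ) fun i => z i = x i
    rw [hammingDist_comm, hammingDist]
    simp only [card_univ, Fintype.card_fin, ne_eq] at this ⊢
    omega
  rw [mutProb, prod_ite, prod_const, prod_const, hcard, hammingDist_comm, hammingDist, mul_comm]

lemma mutProb_nonneg (x z : Fin n → Bool) : 0 ≤ mutProb n x z := by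
  rw [mutProb_eq_pow_hammingDist]
  exact mul_nonneg (by positivity) (pow_nonneg (one_sub_one_div_natCast_nonneg n) _)

lemma mutProb_le_pow_hammingDist (x z : Fin n → Bool) :
    mutProb n x z ≤ (1 / (n : ℝ)) ^ hammingDist x z := by
  rw [mutProb_eq_pow_hammingDist]
  exact mul_le_of_le_one_right (by positivity)
    (pow_le_one₀ (one_sub_one_div_natCast_nonneg n) (sub_le_self _ (by positivity)))

lemma mutProb_self (x : Fin n → Bool) : mutProb n x x = (1 - 1 / (n : ℝ)) ^ n := by
  simp [mutProb]

lemma sum_mutProb_piFinset (x : Fin n → Bool) (S : Fin n → Finset Bool) :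
    ∑ z ∈ Fintype.piFinset S, mutProb n x z =
      ∏ i, ∑ b ∈ S i, if b = x i then 1 - 1 / (n : ℝ) else 1 / n :=
  (prod_univ_sum S fun i b => if b = x i then 1 - 1 / (n : ℝ) else 1 / n).symm

lemma sum_bool_ite_eq (c : Bool) (q : ℝ) : ∑ b : Bool, (if b = c then 1 - q else q) = 1 := by
  cases c <;> simp

lemma sum_mutProb_univ (x : Fin n → Bool) : ∑ z, mutProb n x z = 1 := by
  rw [← Fintype.piFinset_univ, sum_mutProb_piFinset]
  exact prod_eq_one fun i _ => sum_bool_ite_eq (x i) _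

lemma sum_mutProb_filter_ne (x : Fin n → Bool) (a : Fin n) :
    ∑ z with z a ≠ x a, mutProb n x z = 1 / n := by
  have hS : ({z | z a ≠ x a} : Finset (Fin n → Bool)) =
      Fintype.piFinset (Function.update (fun _ => (univ : Finset Bool)) a {!x a}) := by
    ext z
    simp only [mem_filter, mem_univ, true_and, Fintype.mem_piFinset]
    constructor
    · intro hz i
      rcases eq_or_ne i a with rfl | hi
      · simpa using Bool.eq_not.mpr hz
      · simp [hi]
    · intro hz
      exact Bool.eq_not.mp (by simpa using hz a)
  rw [hS, sum_mutProb_piFinset, Fintype.prod_eq_single a fun i hi => by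
    simpa [hi] using sum_bool_ite_eq (x i) (1 / (n : ℝ))]
  simp

end Mutation

section ParetoSet

variable {n : ℕ}

lemma antitone_onesZeros (i : ℕ) : Antitone (onesZeros n i) := fun a b hab => by
  simp only [onesZeros, Bool.le_iff_imp, decide_eq_true_eq]
  exact lt_of_le_of_lt (Fin.le_iff_val_le_val.mp hab)

lemma mem_paretoSet_iff_antitone {x : Fin n → Bool} : x ∈ paretoSet n ↔ Antitone x := by
  refine ⟨fun hx => ?_, fun hx => ?_⟩
  · obtain ⟨i, -, rfl⟩ := mem_image.mp hx
    exact antitone_onesZeros i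
  -- `i` is the first position from which on `x` is constantly `false`.
  have hfalse : ∀ k : Fin n, n ≤ k → x k = false := fun k hk => absurd k.isLt (by omega)
  have hex : ∃ m : ℕ, ∀ k : Fin n, m ≤ k → x k = false := ⟨n, hfalse⟩
  set i := Nat.find hex
  refine mem_image.mpr ⟨i, mem_range.mpr (Nat.lt_succ_of_le (Nat.find_min' hex hfalse)), ?_⟩
  funext k
  by_cases hk : (k : ℕ) < i
  · obtain ⟨k', hkk', hk'⟩ : ∃ k' : Fin n, (k : ℕ) ≤ k' ∧ x k' = true := by
      simpa using Nat.find_min hex hk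
    simpa [onesZeros, hk, hk', Bool.le_iff_imp] using hx (Fin.le_iff_val_le_val.mpr hkk')
  · simp [onesZeros, hk, Nat.find_spec hex k (not_lt.mp hk)]

lemma sum_mutProb_paretoSet_le_of_not_mem {x : Fin n → Bool} (hx : x ∉ paretoSet n) :
    ∑ z ∈ paretoSet n, mutProb n x z ≤ 2 / n := by
  obtain ⟨a, b, hab, hxab⟩ : ∃ a b, a ≤ b ∧ ¬x b ≤ x a := by
    simpa [Antitone] using mt mem_paretoSet_iff_antitone.mpr hx
  -- An antitone `z` cannot agree with `x` at both `a` and `b`.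
  have hsub : paretoSet n ⊆
      univ.filter (fun z => z a ≠ x a) ∪ univ.filter (fun z => z b ≠ x b) := by
    intro z hz
    have := mem_paretoSet_iff_antitone.mp hz hab
    simp only [mem_union, mem_filter, mem_univ, true_and]
    by_contra! h
    exact hxab (h.1 ▸ h.2 ▸ this)
  calc ∑ z ∈ paretoSet n, mutProb n x z
      ≤ ∑ z ∈ univ.filter (fun z => z a ≠ x a) ∪ univ.filter (fun z => z b ≠ x b),
          mutProb n x z :=
        sum_le_sum_of_subset_of_nonneg hsub fun z _ _ => mutProb_nonneg x z
    _ ≤ ∑ z with z a ≠ x a, mutProb n x z + ∑ z with z b ≠ x b, mutProb n x z := by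
        rw [← sum_union_inter]
        exact le_add_of_nonneg_right (sum_nonneg fun z _ => mutProb_nonneg x z)
    _ = 2 / n := by rw [sum_mutProb_filter_ne, sum_mutProb_filter_ne]; ring

lemma hammingDist_onesZeros {i j : ℕ} (hij : i ≤ j) (hj : j ≤ n) :
    hammingDist (onesZeros n i) (onesZeros n j) = j - i := by
  have hfilter : univ.filter (fun k => onesZeros n i k ≠ onesZeros n j k) =
      univ.filter (fun k : Fin n => (k : ℕ) < j) \
        univ.filter (fun k : Fin n => (k : ℕ) < i) := by
    ext k
    simp only [onesZeros, mem_filter, mem_sdiff, mem_univ, true_and, ne_eq, decide_eq_decide]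
    omega
  rw [hammingDist, hfilter, card_sdiff_of_subset (monotone_filter_right _ fun k _ hk => by omega),
    Fin.card_filter_val_lt, Fin.card_filter_val_lt]
  omega

end ParetoSet

section Geometric

variable {p : ℝ}

lemma sum_range_pow_sub_le (hp0 : 0 ≤ p) (hp1 : p < 1) (i : ℕ) :
    ∑ j ∈ range i, p ^ (i - j) ≤ p / (1 - p) := by
  have : ∑ j ∈ range i, p ^ (i - j) = ∑ d ∈ Ico 1 (i + 1), p ^ d :=
    sum_nbij' (fun j => i - j) (fun d => i - d) (by simp; omega) (by simp; omega)
      (by simp; omega) (by simp; omega) (fun _ _ => rfl)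
  simpa [this] using geom_sum_Ico_le_of_lt_one (m := 1) (n := i + 1) hp0 hp1

lemma sum_Ico_pow_sub_le (hp0 : 0 ≤ p) (hp1 : p < 1) (i N : ℕ) :
    ∑ j ∈ Ico (i + 1) N, p ^ (j - i) ≤ p / (1 - p) := by
  have : ∑ j ∈ Ico (i + 1) N, p ^ (j - i) = ∑ d ∈ Ico 1 (N - i), p ^ d :=
    sum_nbij' (fun j => j - i) (fun d => d + i) (by simp; omega) (by simp; omega)
      (by simp; omega) (by simp) (fun _ _ => rfl)
  simpa [this] using geom_sum_Ico_le_of_lt_one (m := 1) (n := N - i) hp0 hp1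

end Geometric

lemma sum_mutProb_paretoSet_onesZeros_le {n i : ℕ} (hn : 2 ≤ n) (hi : i ≤ n) :
    ∑ z ∈ paretoSet n, mutProb n (onesZeros n i) z ≤
      (1 - 1 / (n : ℝ)) ^ n + 2 * (1 / (n : ℝ) / (1 - 1 / n)) := by
  set p : ℝ := 1 / n
  have hp0 : 0 ≤ p := by positivity
  have hp1 : p < 1 := by
    rw [div_lt_one (by positivity)]
    exact_mod_cast hn
  set f : ℕ → ℝ := fun j => mutProb n (onesZeros n i) (onesZeros n j)
  have hbelow : ∑ j ∈ range i, f j ≤ p / (1 - p) := by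
    refine (sum_le_sum fun j hj => ?_).trans (sum_range_pow_sub_le hp0 hp1 i)
    have := mutProb_le_pow_hammingDist (onesZeros n i) (onesZeros n j)
    rwa [hammingDist_comm, hammingDist_onesZeros (mem_range.mp hj).le hi] at this
  have habove : ∑ j ∈ Ico (i + 1) (n + 1), f j ≤ p / (1 - p) := by
    refine (sum_le_sum fun j hj => ?_).trans (sum_Ico_pow_sub_le hp0 hp1 i (n + 1))
    have hj := mem_Ico.mp hj
    have := mutProb_le_pow_hammingDist (onesZeros n i) (onesZeros n j)
    rwa [hammingDist_onesZeros (by omega) (by omega)] at this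
  calc ∑ z ∈ paretoSet n, mutProb n (onesZeros n i) z
      ≤ ∑ j ∈ range (n + 1), f j := sum_image_le_of_nonneg fun z _ => mutProb_nonneg _ z
    _ = ∑ j ∈ range i, f j + f i + ∑ j ∈ Ico (i + 1) (n + 1), f j := by
        rw [← sum_range_succ, sum_range_add_sum_Ico _ (by omega)]
    _ ≤ p / (1 - p) + (1 - p) ^ n + p / (1 - p) := by
        gcongr
        exact (mutProb_self _).le
    _ = (1 - p) ^ n + 2 * (p / (1 - p)) := by ring

lemma sum_mutProb_paretoSet_le_of_mem {n : ℕ} (hn : 1 ≤ n) {x : Fin n → Bool}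
    (hx : x ∈ paretoSet n) :
    ∑ z ∈ paretoSet n, mutProb n x z ≤ 1 / Real.exp 1 + 3 / n := by
  have hn' : (1 : ℝ) ≤ n := by exact_mod_cast hn
  have he : 0 ≤ 1 / Real.exp 1 := by positivity
  rcases le_or_gt n 2 with hn2 | hn3
  · have hn2' : (n : ℝ) ≤ 2 := by exact_mod_cast hn2
    calc ∑ z ∈ paretoSet n, mutProb n x z
        ≤ ∑ z, mutProb n x z :=
          sum_le_sum_of_subset_of_nonneg (subset_univ _) fun z _ _ => mutProb_nonneg x z
      _ = 1 := sum_mutProb_univ x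
      _ ≤ 3 / n := by rw [le_div_iff₀ (by linarith)]; linarith
      _ ≤ 1 / Real.exp 1 + 3 / n := le_add_of_nonneg_left he
  obtain ⟨i, hi, rfl⟩ := mem_image.mp hx
  have hn3' : (3 : ℝ) ≤ n := by exact_mod_cast hn3
  have hexp : (1 - 1 / (n : ℝ)) ^ n ≤ 1 / Real.exp 1 := by
    simpa [Real.exp_neg] using Real.one_sub_div_pow_le_exp_neg (t := 1) hn'
  have hgeom : 2 * (1 / (n : ℝ) / (1 - 1 / n)) ≤ 3 / n := by
    rw [show 2 * (1 / (n : ℝ) / (1 - 1 / n)) = 2 / (n - 1) by field_simp,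
      div_le_div_iff₀ (by linarith) (by linarith)]
    linarith
  linarith [sum_mutProb_paretoSet_onesZeros_le (n := n) (by omega) (mem_range_succ_iff.mp hi)]

lemma sum_mul_le_of_le_on_of_le_off {ι : Type*} [Fintype ι] (s : Finset ι) {w g : ι → ℝ}
    (hw0 : ∀ i, 0 ≤ w i) (hw1 : ∑ i, w i = 1) {a b : ℝ} (hs : ∀ i ∈ s, g i ≤ a)
    (hsc : ∀ i ∉ s, g i ≤ b) :
    ∑ i, w i * g i ≤ (∑ i ∈ s, w i) * a + (1 - ∑ i ∈ s, w i) * b := by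
  classical
  rw [← hw1, ← sum_add_sum_compl s w, add_sub_cancel_left, ← sum_add_sum_compl s, sum_mul,
    sum_mul]
  gcongr with i hi i hi
  · exact hw0 i
  · exact hs i hi
  · exact hw0 i
  · exact hsc i (mem_compl.mp hi)

theorem prob_mutation_of_random_parent_hits_paretoSet_general (n : ℕ) (hn : 1 ≤ n)
    (w : (Fin n → Bool) → ℝ) (hw0 : ∀ x, 0 ≤ w x) (hw1 : ∑ x : Fin n → Bool, w x = 1)
    (r : ℝ) (hF : ∑ x ∈ paretoSet n, w x ≤ r) :
    ∑ x : Fin n → Bool, w x * ∑ z ∈ paretoSet n, mutProb n x z ≤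
      r * (1 / Real.exp 1 + 3 / (n : ℝ)) + 3 / (n : ℝ) := by
  have hP0 : 0 ≤ ∑ x ∈ paretoSet n, w x := sum_nonneg fun x _ => hw0 x
  have h3n : 0 ≤ 3 / (n : ℝ) := by positivity
  have hab : 0 ≤ 1 / Real.exp 1 + 3 / (n : ℝ) := by positivity
  calc ∑ x, w x * ∑ z ∈ paretoSet n, mutProb n x z
      ≤ (∑ x ∈ paretoSet n, w x) * (1 / Real.exp 1 + 3 / n) +
          (1 - ∑ x ∈ paretoSet n, w x) * (3 / n) :=
        sum_mul_le_of_le_on_of_le_off _ hw0 hw1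
          (fun x hx => sum_mutProb_paretoSet_le_of_mem hn hx)
          (fun x hx => (sum_mutProb_paretoSet_le_of_not_mem hx).trans (by gcongr; norm_num))
    _ ≤ r * (1 / Real.exp 1 + 3 / n) + 3 / n := by
        linarith [mul_le_mul_of_nonneg_right hF hab, mul_nonneg hP0 h3n]

/-- Let `x` be a random bit string, with distribution given by the mass function `w`,
such that `P(x ∈ F) ≤ r`, where `F = {1^i 0^(n-i) : 0 ≤ i ≤ n}` is the Pareto set of LOTZ,
and let `y` be obtained from `x` by standard bit mutation with rate `1/n`.
Then `P(y ∈ F) ≤ r (1/e + 3/n) + 3/n`. -/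
theorem prob_mutation_of_random_parent_hits_paretoSet (n : ℕ) (hn : 1 ≤ n)
    (w : (Fin n → Bool) → ℝ) (hw0 : ∀ x, 0 ≤ w x) (hw1 : ∑ x : Fin n → Bool, w x = 1)
    (r : ℝ) (hr0 : 0 ≤ r) (hr1 : r ≤ 1) (hF : ∑ x ∈ paretoSet n, w x ≤ r) :
    ∑ x : Fin n → Bool, w x * ∑ z ∈ paretoSet n, mutProb n x z ≤
      r * (1 / Real.exp 1 + 3 / (n : ℝ)) + 3 / (n : ℝ) :=
  prob_mutation_of_random_parent_hits_paretoSet_general n hn w hw0 hw1 r hF
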